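/- Let d ≥ 1, let 0 < σ < σ̃, C ≥ 0, ε₂ > 0, and L > 0. Let g_σ(u) = (2πσ²)^{−d/2} exp(−‖u‖² / (2σ²)) denote the centered isotropic Gaussian density with variance σ². Let μ, μ̃: ℝ^d → ℝ^d be measurable maps with ‖μ(x) − μ̃(x)‖ ≤ C for every x ∈ ℝ^d, and let ℓ, ℓ′: ℝ^d → [0, L] be measurable. Then the intermediate importance weight function w(x, x′) = (ℓ(x′) + ε₂) · g_σ(x′ − μ(x)) / [ (ℓ′(x) + ε₂) · g_σ̃(x′ − μ̃(x)) ] is bounded uniformly over (x, x′) ∈ ℝ^d × ℝ^d. -/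

import Mathlib

open MeasureTheory Real

/-- The centered isotropic Gaussian density with variance `σ²` per coordinate on `ℝ^d`. -/
noncomputable def gaussDens (d : ℕ) (σ : ℝ) (u : EuclideanSpace ℝ (Fin d)) : ℝ :=
  (2 * π * σ ^ 2) ^ (-(d : ℝ) / 2) * Real.exp (-‖u‖ ^ 2 / (2 * σ ^ 2))

/-- Boundedness of the intermediate importance weight
`w(x, x′) = (ℓ(x′) + ε₂) g_σ(x′ − μ(x)) / [(ℓ′(x) + ε₂) g_σ̃(x′ − μ̃(x))]` when
`0 < σ < σ̃`, the likelihoods take values in `[0, L]`, and `‖μ(x) − μ̃(x)‖ ≤ C`. -/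
theorem stmt9 (d : ℕ) (hd : 1 ≤ d) (σ σ' C ε₂ L : ℝ)
    (hσ : 0 < σ) (hσσ' : σ < σ') (hC : 0 ≤ C) (hε₂ : 0 < ε₂) (hL : 0 < L)
    (μ μ' : EuclideanSpace ℝ (Fin d) → EuclideanSpace ℝ (Fin d))
    (hμ : Measurable μ) (hμ' : Measurable μ')
    (hdist : ∀ x, ‖μ x - μ' x‖ ≤ C)
    (ℓ ℓ' : EuclideanSpace ℝ (Fin d) → ℝ)
    (hℓ : Measurable ℓ) (hℓ' : Measurable ℓ')
    (hℓ_range : ∀ x, ℓ x ∈ Set.Icc (0 : ℝ) L)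
    (hℓ'_range : ∀ x, ℓ' x ∈ Set.Icc (0 : ℝ) L) :
    ∃ B : ℝ, ∀ x x' : EuclideanSpace ℝ (Fin d),
      (ℓ x' + ε₂) * gaussDens d σ (x' - μ x) /
        ((ℓ' x + ε₂) * gaussDens d σ' (x' - μ' x)) ≤ B := by
  have hσ' : 0 < σ' := hσ.trans hσσ'
  have hgap : 0 < σ' ^ 2 - σ ^ 2 := by nlinarith
  have hπ : 0 < π := Real.pi_pos
  set A : ℝ := (2 * π * σ ^ 2) ^ (-(d : ℝ) / 2) with hA_def
  set A' : ℝ := (2 * π * σ' ^ 2) ^ (-(d : ℝ) / 2) with hA'_def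
  have hA : 0 < A := Real.rpow_pos_of_pos (by positivity) _
  have hA' : 0 < A' := Real.rpow_pos_of_pos (by positivity) _
  set M : ℝ := C ^ 2 / (2 * (σ' ^ 2 - σ ^ 2)) with hM_def
  refine ⟨(L + ε₂) * A * Real.exp M / (ε₂ * A'), fun x x' => ?_⟩
  have hden : 0 < (ℓ' x + ε₂) * gaussDens d σ' (x' - μ' x) := by
    have h1 := (hℓ'_range x).1
    have : 0 < gaussDens d σ' (x' - μ' x) := by
      unfold gaussDens
      exact mul_pos (Real.rpow_pos_of_pos (by positivity) _) (Real.exp_pos _)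
    nlinarith
  rw [div_le_iff₀ hden]
  set t : ℝ := ‖x' - μ x‖ with ht_def
  set s : ℝ := ‖x' - μ' x‖ with hs_def
  have ht : 0 ≤ t := norm_nonneg _
  have hs : 0 ≤ s := norm_nonneg _
  have hstC : s ≤ t + C := by
    have : x' - μ' x = (x' - μ x) + (μ x - μ' x) := by abel
    calc s = ‖(x' - μ x) + (μ x - μ' x)‖ := by rw [hs_def, this]
    _ ≤ ‖x' - μ x‖ + ‖μ x - μ' x‖ := norm_add_le _ _
    _ ≤ t + C := by have := hdist x; linarith
  have key : -t ^ 2 / (2 * σ ^ 2) ≤ M + -s ^ 2 / (2 * σ' ^ 2) := by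
    rw [hM_def, div_add_div _ _ (by positivity) (by positivity : (2 * σ' ^ 2) ≠ 0),
      div_le_div_iff₀ (by positivity) (by positivity)]
    have hs2 : s ^ 2 ≤ (t + C) ^ 2 := by nlinarith
    have hmul : s ^ 2 * (σ ^ 2 * (σ' ^ 2 - σ ^ 2)) ≤ (t + C) ^ 2 * (σ ^ 2 * (σ' ^ 2 - σ ^ 2)) :=
      mul_le_mul_of_nonneg_right hs2 (by positivity)
    nlinarith [sq_nonneg ((σ' ^ 2 - σ ^ 2) * t - σ ^ 2 * C)]
  have hexp : Real.exp (-t ^ 2 / (2 * σ ^ 2)) ≤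
      Real.exp M * Real.exp (-s ^ 2 / (2 * σ' ^ 2)) := by
    rw [← Real.exp_add]
    exact Real.exp_le_exp.mpr key
  have hℓx' := (hℓ_range x').2
  have hℓ'x := (hℓ'_range x).1
  have hEpos : 0 < Real.exp (-s ^ 2 / (2 * σ' ^ 2)) := Real.exp_pos _
  have hE1pos : (0:ℝ) < Real.exp (-t ^ 2 / (2 * σ ^ 2)) := Real.exp_pos _
  show (ℓ x' + ε₂) * (A * Real.exp (-t ^ 2 / (2 * σ ^ 2))) ≤
      (L + ε₂) * A * Real.exp M / (ε₂ * A') *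
        ((ℓ' x + ε₂) * (A' * Real.exp (-s ^ 2 / (2 * σ' ^ 2))))
  have step1 : (ℓ x' + ε₂) * (A * Real.exp (-t ^ 2 / (2 * σ ^ 2))) ≤
      (L + ε₂) * (A * (Real.exp M * Real.exp (-s ^ 2 / (2 * σ' ^ 2)))) := by
    have h1 : (ℓ x' + ε₂) * (A * Real.exp (-t ^ 2 / (2 * σ ^ 2))) ≤
        (L + ε₂) * (A * Real.exp (-t ^ 2 / (2 * σ ^ 2))) := by
      apply mul_le_mul_of_nonneg_right (by linarith) (by positivity)
    refine h1.trans ?_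
    apply mul_le_mul_of_nonneg_left ?_ (by linarith)
    exact mul_le_mul_of_nonneg_left hexp hA.le
  refine step1.trans ?_
  have step2 : (L + ε₂) * A * Real.exp M / (ε₂ * A') *
      ((ℓ' x + ε₂) * (A' * Real.exp (-s ^ 2 / (2 * σ' ^ 2)))) ≥
      (L + ε₂) * A * Real.exp M / (ε₂ * A') *
      (ε₂ * (A' * Real.exp (-s ^ 2 / (2 * σ' ^ 2)))) := by
    apply mul_le_mul_of_nonneg_left ?_ (by positivity)
    apply mul_le_mul_of_nonneg_right (by linarith) (by positivity)
  refine le_trans (le_of_eq ?_) step2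
  field_simp
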